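/- arXiv:2206.01995 — 4 statements merged into one kernel-verified Lean document; each statement's English description precedes it below -/
import Mathlib

section
/- Let d ≥ 1 and let v = (v_1, ..., v_d) be a unit vector in R^d (i.e., ‖v‖_2 = 1), and let n ≥ 3 be an integer with d ≤ n - 1. Set n_0 = sqrt(n-2) + 1/(2*sqrt(n-2)). If |v_1| ≥ n_0 / sqrt(n_0^2 + 1), then for every x = (x_1, ..., x_d) ∈ {0,1}^d with x_1 = 1, we have |⟨x, v⟩| ≥ 1 / sqrt(4n^2 - 8n + 1). -/
open Finset

/-!
Split off the first coordinate: ⟨x, v⟩ = v₁ + Σ_{i≥2} x_i v_i, and by Cauchy–Schwarz the tail is at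
most √(m (1 - v₁²)) in absolute value, where m = n - 2 ≥ d - 1. Hence |⟨x, v⟩| ≥ |v₁| - √(m (1 - v₁²)),
which increases with |v₁|. The threshold n₀ / √(n₀² + 1) equals (2m + 1) / √K with K = 4m² + 8m + 1,
and there 1 - v₁² = 4m / K, so the bound is (2m + 1) / √K - 2m / √K = 1 / √K.
-/

theorem abs_sum_mul_le_sum_abs_of_mem_zero_one {ι : Type*} (s : Finset ι) {x : ι → ℝ}
    (hx : ∀ i, x i = 0 ∨ x i = 1) (v : ι → ℝ) :
    |∑ i ∈ s, x i * v i| ≤ ∑ i ∈ s, |v i| := by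
  refine (abs_sum_le_sum_abs _ _).trans (sum_le_sum fun i _ => ?_)
  rcases hx i with h | h <;> simp [h]

theorem sum_abs_le_sqrt_card_mul_sum_sq {ι : Type*} (s : Finset ι) (f : ι → ℝ) :
    ∑ i ∈ s, |f i| ≤ √(#s * ∑ i ∈ s, f i ^ 2) := by
  refine (le_abs_self _).trans (Real.abs_le_sqrt ?_)
  simpa only [sq_abs] using sq_sum_le_card_mul_sum_sq (s := s) (f := fun i => |f i|)

theorem abs_sub_sqrt_le_abs_sum_mul {ι : Type*} [Fintype ι] [DecidableEq ι] {v x : ι → ℝ}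
    {m : ℝ} (hv : ∑ i, v i ^ 2 = 1) (hx : ∀ i, x i = 0 ∨ x i = 1) {i₀ : ι} (hx₀ : x i₀ = 1)
    (hm : (Fintype.card ι : ℝ) - 1 ≤ m) :
    |v i₀| - √(m * (1 - v i₀ ^ 2)) ≤ |∑ i, x i * v i| := by
  set s := univ.erase i₀
  have htail : ∑ i ∈ s, v i ^ 2 = 1 - v i₀ ^ 2 := by
    rw [← hv, ← add_sum_erase _ _ (mem_univ i₀)]; ring
  have hcard : (#s : ℝ) ≤ m := by
    rwa [card_erase_of_mem (mem_univ _), card_univ, Nat.cast_pred (Fintype.card_pos_iff.2 ⟨i₀⟩)]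
  have htail_le : |∑ i ∈ s, x i * v i| ≤ √(m * (1 - v i₀ ^ 2)) :=
    calc |∑ i ∈ s, x i * v i| ≤ ∑ i ∈ s, |v i| := abs_sum_mul_le_sum_abs_of_mem_zero_one s hx v
      _ ≤ √(#s * ∑ i ∈ s, v i ^ 2) := sum_abs_le_sqrt_card_mul_sum_sq s v
      _ ≤ √(m * (1 - v i₀ ^ 2)) := by
        rw [htail]
        exact Real.sqrt_le_sqrt (mul_le_mul_of_nonneg_right hcard
          (htail ▸ sum_nonneg fun i _ => sq_nonneg (v i)))
  rw [← add_sum_erase _ _ (mem_univ i₀), hx₀, one_mul]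
  linarith [abs_sub_abs_le_abs_add (v i₀) (∑ i ∈ s, x i * v i)]

theorem sub_sqrt_mul_one_sub_sq_le {m a t : ℝ} (hm : 0 ≤ m) (ha : 0 ≤ a) (h : a ≤ |t|) :
    a - √(m * (1 - a ^ 2)) ≤ |t| - √(m * (1 - t ^ 2)) := by
  have hsq : a ^ 2 ≤ t ^ 2 := sq_le_sq.2 (by rwa [abs_of_nonneg ha])
  exact sub_le_sub h (Real.sqrt_le_sqrt (mul_le_mul_of_nonneg_left (by linarith) hm))

theorem div_div_sqrt_div_sq_add_one (a : ℝ) {b : ℝ} (hb : 0 < b) :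
    a / b / √((a / b) ^ 2 + 1) = a / √(a ^ 2 + b ^ 2) := by
  have : (a / b) ^ 2 + 1 = (a ^ 2 + b ^ 2) / b ^ 2 := by field_simp
  rw [this, Real.sqrt_div' _ (sq_nonneg b), Real.sqrt_sq hb.le]
  field_simp

theorem sqrt_add_one_div_two_sqrt_div_sqrt_sq_add_one {m : ℝ} (hm : 0 < m) :
    (√m + 1 / (2 * √m)) / √((√m + 1 / (2 * √m)) ^ 2 + 1)
      = (2 * m + 1) / √(4 * m ^ 2 + 8 * m + 1) := by
  have hs : 0 < √m := Real.sqrt_pos.2 hm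
  have h : √m + 1 / (2 * √m) = (2 * m + 1) / (2 * √m) := by
    field_simp; rw [Real.sq_sqrt hm.le]; ring
  rw [h, div_div_sqrt_div_sq_add_one _ (by positivity), mul_pow, Real.sq_sqrt hm.le]
  congr 2
  ring

theorem sqrt_mul_one_sub_sq_eq {m : ℝ} (hm : 0 ≤ m) :
    √(m * (1 - ((2 * m + 1) / √(4 * m ^ 2 + 8 * m + 1)) ^ 2))
      = 2 * m / √(4 * m ^ 2 + 8 * m + 1) := by
  have hK : 0 < 4 * m ^ 2 + 8 * m + 1 := by positivity
  rw [← Real.sqrt_sq (by positivity : 0 ≤ 2 * m / √(4 * m ^ 2 + 8 * m + 1))]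
  congr 1
  rw [div_pow, div_pow, Real.sq_sqrt hK.le]
  field_simp
  ring

theorem stmt0 (d n : ℕ) (hd : 1 ≤ d) (hn : 3 ≤ n) (hdn : d ≤ n - 1)
    (v : Fin d → ℝ) (hv : Real.sqrt (∑ i, v i ^ 2) = 1)
    (n₀ : ℝ) (hn₀ : n₀ = Real.sqrt ((n : ℝ) - 2) + 1 / (2 * Real.sqrt ((n : ℝ) - 2)))
    (hv1 : n₀ / Real.sqrt (n₀ ^ 2 + 1) ≤ |v ⟨0, hd⟩|)
    (x : Fin d → ℝ) (hx : ∀ i, x i = 0 ∨ x i = 1) (hx1 : x ⟨0, hd⟩ = 1) :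
    1 / Real.sqrt (4 * (n : ℝ) ^ 2 - 8 * n + 1) ≤ |∑ i, x i * v i| := by
  have hn' : (3 : ℝ) ≤ n := by exact_mod_cast hn
  have hd' : (d : ℝ) + 1 ≤ n := by exact_mod_cast (by omega : d + 1 ≤ n)
  set m : ℝ := n - 2
  have hm : 0 < m := by linarith
  have hcard : (Fintype.card (Fin d) : ℝ) - 1 ≤ m := by rw [Fintype.card_fin]; linarith
  have hK : 4 * (n : ℝ) ^ 2 - 8 * n + 1 = 4 * m ^ 2 + 8 * m + 1 := by ring
  rw [hn₀, sqrt_add_one_div_two_sqrt_div_sqrt_sq_add_one hm] at hv1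
  calc 1 / √(4 * (n : ℝ) ^ 2 - 8 * n + 1)
      = (2 * m + 1) / √(4 * m ^ 2 + 8 * m + 1)
          - √(m * (1 - ((2 * m + 1) / √(4 * m ^ 2 + 8 * m + 1)) ^ 2)) := by
        rw [hK, sqrt_mul_one_sub_sq_eq hm.le]; ring
    _ ≤ |v ⟨0, hd⟩| - √(m * (1 - v ⟨0, hd⟩ ^ 2)) :=
        sub_sqrt_mul_one_sub_sq_le hm.le (by positivity) hv1
    _ ≤ |∑ i, x i * v i| := abs_sub_sqrt_le_abs_sum_mul (Real.sqrt_eq_one.1 hv) hx hx1 hcard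
end

section
/- Let W_1, ..., W_T ∈ R^d with ‖W_t‖_2 ≤ sqrt(d) for all t, and define M_0 = I and M_t = M_{t-1} + W_t W_tᵀ. Then for any real n ≥ d with each ‖W_t‖²_{M_{t-1}^{-1}} ≤ n, Σ_{t=1}^{T} ‖W_t‖²_{M_{t-1}^{-1}} ≤ (n / log(n+1)) · Σ_{t=1}^{T} log(1 + ‖W_t‖²_{M_{t-1}^{-1}}) ≤ (n / log(n+1)) · log det(M_T) ≤ (n·d / log(n+1)) · log(1 + T·d²/d). -/
open Matrix Finset

lemma aux_vv (d : ℕ) (w : Fin d → ℝ) : (Matrix.vecMulVec w w).PosSemidef := by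
  rw [Matrix.vecMulVec_eq Unit]
  have h := Matrix.posSemidef_self_mul_conjTranspose (Matrix.replicateCol Unit w)
  rwa [Matrix.conjTranspose_replicateCol, star_trivial] at h

lemma aux_det (d : ℕ) (A : Matrix (Fin d) (Fin d) ℝ) (hA : A.PosDef) (u : Fin d → ℝ) :
    (A + Matrix.vecMulVec u u).det = A.det * (1 + u ⬝ᵥ (A⁻¹ *ᵥ u)) := by
  rw [Matrix.vecMulVec_eq Unit, Matrix.det_add_replicateCol_mul_replicateRow (isUnit_iff_ne_zero.2 hA.det_pos.ne') u u,
    Matrix.det_unique (1 + Matrix.replicateRow Unit u * A⁻¹ * Matrix.replicateCol Unit u)]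
  congr 1
  simp [Matrix.mul_apply, Matrix.replicateCol, Matrix.replicateRow, dotProduct, Matrix.mulVec,
    Finset.sum_mul, Finset.mul_sum]
  rw [Finset.sum_comm]
  exact Finset.sum_congr rfl fun i _ => Finset.sum_congr rfl fun j _ => by ring

lemma aux_concave {x n : ℝ} (hn : 1 ≤ n) (hx0 : 0 ≤ x) (hxn : x ≤ n) :
    x * Real.log (n + 1) ≤ n * Real.log (1 + x) := by
  have hnpos : (0:ℝ) < n := lt_of_lt_of_le one_pos hn
  have ha : (0:ℝ) ≤ 1 - x/n := by
    have : x / n ≤ 1 := (div_le_one hnpos).2 hxn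
    linarith
  have hb : (0:ℝ) ≤ x/n := by positivity
  have h := strictConcaveOn_log_Ioi.concaveOn.2 (Set.mem_Ioi.2 one_pos)
    (Set.mem_Ioi.2 (by linarith : (0:ℝ) < 1 + n)) ha hb (by ring)
  simp only [smul_eq_mul, Real.log_one, mul_zero, zero_add, mul_one] at h
  have hxn' : 1 - x/n + x/n * (1+n) = 1 + x := by field_simp; ring
  rw [hxn', add_comm (1:ℝ) n] at h
  have := mul_le_mul_of_nonneg_left h (le_of_lt hnpos)
  calc x * Real.log (n+1) = n * (x/n * Real.log (n+1)) := by field_simp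
    _ ≤ n * Real.log (1+x) := this

lemma aux_trace (d : ℕ) (A : Matrix (Fin d) (Fin d) ℝ) (hA : A.IsHermitian) :
    A.trace = ∑ i, hA.eigenvalues i := by
  conv_lhs => rw [hA.spectral_theorem]
  rw [Unitary.conjStarAlgAut_apply]
  rw [Matrix.trace_mul_cycle]
  have : (star (hA.eigenvectorUnitary : Matrix (Fin d) (Fin d) ℝ)) *
      (hA.eigenvectorUnitary : Matrix (Fin d) (Fin d) ℝ) = 1 := by
    exact Matrix.mem_unitaryGroup_iff'.mp hA.eigenvectorUnitary.2
  rw [this, one_mul, Matrix.trace_diagonal]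
  simp

lemma aux_amgm (d : ℕ) (hd : 0 < d) (A : Matrix (Fin d) (Fin d) ℝ) (hA : A.PosDef) :
    A.det ≤ (A.trace / d) ^ d := by
  have hev := hA.isHermitian.det_eq_prod_eigenvalues
  have htr := aux_trace d A hA.isHermitian
  have hnn : ∀ i ∈ Finset.univ, (0:ℝ) ≤ hA.isHermitian.eigenvalues i :=
    fun i _ => (hA.posSemidef.eigenvalues_nonneg i)
  have hw : ∀ i ∈ (Finset.univ : Finset (Fin d)), (0:ℝ) ≤ 1/d := fun i _ => by positivity
  have hws : ∑ _i : Fin d, (1:ℝ)/d = 1 := by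
    rw [Finset.sum_const, Finset.card_univ, Fintype.card_fin, nsmul_eq_mul]
    field_simp
  have hgm := Real.geom_mean_le_arith_mean_weighted Finset.univ (fun _ => 1/d)
    hA.isHermitian.eigenvalues hw hws hnn
  have hd0 : (d:ℝ) ≠ 0 := Nat.cast_ne_zero.2 hd.ne'
  have key : A.det = (∏ i, hA.isHermitian.eigenvalues i ^ ((1:ℝ)/d)) ^ d := by
    rw [← Finset.prod_pow]
    rw [hev]
    apply Finset.prod_congr rfl
    intro i _
    rw [← Real.rpow_natCast (hA.isHermitian.eigenvalues i ^ ((1:ℝ)/d)) d,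
      ← Real.rpow_mul (hnn i (Finset.mem_univ i)), one_div,
      inv_mul_cancel₀ hd0, Real.rpow_one]
    simp
  rw [key]
  apply pow_le_pow_left₀ (Finset.prod_nonneg fun i _ => Real.rpow_nonneg (hnn i (Finset.mem_univ i)) _)
  calc (∏ i, hA.isHermitian.eigenvalues i ^ ((1:ℝ)/d)) ≤ ∑ i, 1/(d:ℝ) * hA.isHermitian.eigenvalues i := hgm
    _ = A.trace / d := by rw [htr, Finset.sum_div]; exact Finset.sum_congr rfl fun i _ => by ring

theorem stmt9 (d : ℕ) (hd : 0 < d) (T : ℕ) (W : ℕ → Fin d → ℝ)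
    (hW : ∀ t, ∑ i, (W t i) ^ 2 ≤ (d : ℝ))
    (M : ℕ → Matrix (Fin d) (Fin d) ℝ) (hM0 : M 0 = 1)
    (hMrec : ∀ t, M (t + 1) = M t + Matrix.vecMulVec (W (t + 1)) (W (t + 1)))
    (n : ℝ) (hn : (d : ℝ) ≤ n)
    (hquad : ∀ t ∈ Finset.Icc 1 T, W t ⬝ᵥ ((M (t - 1))⁻¹ *ᵥ W t) ≤ n) :
    (∑ t ∈ Finset.Icc 1 T, W t ⬝ᵥ ((M (t - 1))⁻¹ *ᵥ W t) ≤
        (n / Real.log (n + 1)) *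
          ∑ t ∈ Finset.Icc 1 T, Real.log (1 + W t ⬝ᵥ ((M (t - 1))⁻¹ *ᵥ W t))) ∧
    ((n / Real.log (n + 1)) *
        ∑ t ∈ Finset.Icc 1 T, Real.log (1 + W t ⬝ᵥ ((M (t - 1))⁻¹ *ᵥ W t)) ≤
      (n / Real.log (n + 1)) * Real.log ((M T).det)) ∧
    ((n / Real.log (n + 1)) * Real.log ((M T).det) ≤
      (n * d / Real.log (n + 1)) * Real.log (1 + (T : ℝ) * d ^ 2 / d)) := by
  have hd1 : (1:ℝ) ≤ d := by exact_mod_cast hd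
  have hd0 : (d:ℝ) ≠ 0 := by positivity
  have hn1 : (1:ℝ) ≤ n := hd1.trans hn
  have hL : 0 < Real.log (n + 1) := Real.log_pos (by linarith)
  have hPD : ∀ t, (M t).PosDef := by
    intro t
    induction t with
    | zero => rw [hM0]; exact Matrix.PosDef.one
    | succ t ih => rw [hMrec t]; exact ih.add_posSemidef (aux_vv d (W (t+1)))
  have hx0 : ∀ t, 0 ≤ W t ⬝ᵥ ((M (t - 1))⁻¹ *ᵥ W t) := by
    intro t
    have h := ((hPD (t-1)).inv.posSemidef).dotProduct_mulVec_nonneg (W t)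
    simpa using h
  have hlogdet : ∀ S : ℕ, Real.log ((M S).det) =
      ∑ t ∈ Finset.Icc 1 S, Real.log (1 + W t ⬝ᵥ ((M (t - 1))⁻¹ *ᵥ W t)) := by
    intro S
    induction S with
    | zero => simp [hM0]
    | succ S ih =>
      rw [Finset.sum_Icc_succ_top (by omega : 1 ≤ S + 1), ← ih]
      have h1 : (0:ℝ) < (M S).det := (hPD S).det_pos
      have h2 : (0:ℝ) < 1 + W (S+1) ⬝ᵥ ((M S)⁻¹ *ᵥ W (S+1)) := by
        have := hx0 (S+1)
        simp only [Nat.add_sub_cancel] at this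
        linarith
      rw [hMrec S, aux_det d (M S) (hPD S) (W (S+1)), Real.log_mul h1.ne' h2.ne']
      simp only [Nat.add_sub_cancel]
  have htr : ∀ S : ℕ, (M S).trace ≤ (d:ℝ) + S * d := by
    intro S
    induction S with
    | zero => simp [hM0, Matrix.trace_one]
    | succ S ih =>
      rw [hMrec S, Matrix.trace_add]
      have hvv : (Matrix.vecMulVec (W (S+1)) (W (S+1))).trace = ∑ i, (W (S+1) i)^2 := by
        simp [Matrix.trace, Matrix.diag, Matrix.vecMulVec_apply, sq]
      rw [hvv]
      have := hW (S+1)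
      push_cast
      linarith
  refine ⟨?_, ?_, ?_⟩
  · rw [Finset.mul_sum]
    apply Finset.sum_le_sum
    intro t ht
    have h1 := aux_concave hn1 (hx0 t) (hquad t ht)
    rw [div_mul_eq_mul_div, le_div_iff₀ hL]
    exact h1
  · rw [hlogdet T]
  · have h2 : 1 + (T:ℝ) * d^2 / d = 1 + T * d := by field_simp
    rw [h2]
    have htrd : (0:ℝ) ≤ (M T).trace := by
      rw [aux_trace d (M T) (hPD T).isHermitian]
      exact Finset.sum_nonneg fun i _ => (hPD T).posSemidef.eigenvalues_nonneg i
    have hdle : (M T).det ≤ (1 + (T:ℝ) * d)^d := by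
      calc (M T).det ≤ ((M T).trace / d)^d := aux_amgm d hd (M T) (hPD T)
        _ ≤ (1 + (T:ℝ) * d)^d := by
          apply pow_le_pow_left₀ (by positivity)
          rw [div_le_iff₀ (by positivity : (0:ℝ) < d)]
          have := htr T
          have hT0 : (0:ℝ) ≤ (T:ℝ) := Nat.cast_nonneg T
          have h3 : (T:ℝ) * d ≤ (T:ℝ) * d * d :=
            le_mul_of_one_le_right (mul_nonneg hT0 (by positivity)) hd1
          nlinarith
    have hlog : Real.log ((M T).det) ≤ d * Real.log (1 + (T:ℝ) * d) := by
      calc Real.log ((M T).det) ≤ Real.log ((1 + (T:ℝ)*d)^d) :=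
            Real.log_le_log ((hPD T).det_pos) hdle
        _ = d * Real.log (1 + (T:ℝ)*d) := by rw [Real.log_pow]
    calc (n / Real.log (n + 1)) * Real.log ((M T).det)
        ≤ (n / Real.log (n + 1)) * (d * Real.log (1 + (T:ℝ)*d)) :=
          mul_le_mul_of_nonneg_left hlog (by positivity)
      _ = (n * d / Real.log (n + 1)) * Real.log (1 + (T:ℝ)*d) := by ring
end

section
/- In a binary linear model on a DAG with monotone activation (each node X becomes active with probability f_X(θ*_X · pa(X)) where every f_X is monotonically non-decreasing and all parameters θ* are nonnegative), the expected value of the sink node Y is monotone in the intervention: for any set S of nodes and any node X ∉ S ∪ {Y}, E[Y | do(S = 1)] ≤ E[Y | do(S ∪ {X} = 1)]. -/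
/-!
Under the threshold coupling, nonnegative weights and non-decreasing activation functions make
the activated set grow with the intervened set, by well-founded induction along the DAG, for
every realization of the thresholds. Hence the event that `Y` is active only grows, and the
expectation of `Y`, which is the probability of that event, can only increase.
-/

open MeasureTheory Classical

/-- The set of activated nodes in the threshold formulation of a BGLM on a DAG:
a node `X` is active iff it is intervened upon (`X ∈ S`) or its threshold `γ X` is at
most `f X` applied to the total incoming weight from its active parents.  Defined by
well-founded recursion along the (acyclic) parent relation `E`. -/
noncomputable def activeSet {V : Type*} [Fintype V]
    (E : V → V → Prop) (hwf : WellFounded E)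
    (f : V → ℝ → ℝ) (θ : V → V → ℝ) (γ : V → ℝ) (S : Finset V) : V → Prop :=
  hwf.fix (fun X rec =>
    X ∈ S ∨ γ X ≤ f X (∑ Z : V, if h : E Z X then (if rec Z h then θ Z X else 0) else 0))

section activeSet

variable {V : Type*} [Fintype V] (E : V → V → Prop) (hwf : WellFounded E)
  (f : V → ℝ → ℝ) (θ : V → V → ℝ)

theorem activeSet_iff (γ : V → ℝ) (S : Finset V) (X : V) :
    activeSet E hwf f θ γ S X ↔
      X ∈ S ∨ γ X ≤ f X (∑ Z : V, if E Z X then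
        (if activeSet E hwf f θ γ S Z then θ Z X else 0) else 0) := by
  rw [activeSet, hwf.fix_eq]
  simp only [dite_eq_ite]

theorem activeSet_mono (hf : ∀ X, Monotone (f X)) (hθ : ∀ a b, 0 ≤ θ a b)
    (γ : V → ℝ) {S T : Finset V} (hST : S ⊆ T) (X : V) :
    activeSet E hwf f θ γ S X → activeSet E hwf f θ γ T X := by
  induction X using hwf.induction with
  | _ X ih =>
    rw [activeSet_iff, activeSet_iff]
    refine Or.imp (@hST X) fun h => h.trans (hf X (Finset.sum_le_sum fun Z _ => ?_))
    split_ifs with hZ hS hT hT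
    exacts [le_rfl, absurd (ih Z hZ hS) hT, hθ Z X, le_rfl, le_rfl]

theorem measurableSet_activeSet {Ω : Type*} [MeasurableSpace Ω] (hf : ∀ X, Monotone (f X))
    (γ : Ω → V → ℝ) (hγ : ∀ X, Measurable (fun ω => γ ω X)) (S : Finset V) (X : V) :
    MeasurableSet {ω | activeSet E hwf f θ (γ ω) S X} := by
  induction X using hwf.induction with
  | _ X ih =>
    simp only [activeSet_iff E hwf f θ _ S X, Set.ofPred_or]
    have hweight : Measurable fun ω => ∑ Z : V, if E Z X then
        (if activeSet E hwf f θ (γ ω) S Z then θ Z X else 0) else 0 :=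
      Finset.measurable_sum _ fun Z _ => by
        split_ifs with hZ
        exacts [Measurable.ite (ih Z hZ) measurable_const measurable_const, measurable_const]
    exact (MeasurableSet.const _).union (measurableSet_le (hγ X) ((hf X).measurable.comp hweight))

end activeSet

theorem stmt12_general {V : Type*} [Fintype V] {Ω : Type*} [MeasurableSpace Ω]
    (μ : Measure Ω) [IsProbabilityMeasure μ]
    (E : V → V → Prop) (hwf : WellFounded E)
    (f : V → ℝ → ℝ) (hf : ∀ X, Monotone (f X))
    (θ : V → V → ℝ) (hθ : ∀ a b, 0 ≤ θ a b)
    (γ : Ω → V → ℝ) (hγ : ∀ X, Measurable (fun ω => γ ω X))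
    (S : Finset V) (X Y : V) :
    ∫ ω, (if activeSet E hwf f θ (γ ω) S Y then (1 : ℝ) else 0) ∂μ ≤
      ∫ ω, (if activeSet E hwf f θ (γ ω) (insert X S) Y then (1 : ℝ) else 0) ∂μ := by
  have hexpectation : ∀ T : Finset V,
      ∫ ω, (if activeSet E hwf f θ (γ ω) T Y then (1 : ℝ) else 0) ∂μ =
        μ.real {ω | activeSet E hwf f θ (γ ω) T Y} := fun T => by
    simpa [Set.indicator_apply] using
      integral_indicator_one (μ := μ) (measurableSet_activeSet E hwf f θ hf γ hγ T Y)
  rw [hexpectation, hexpectation]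
  exact measureReal_mono fun ω => activeSet_mono E hwf f θ hf hθ (γ ω) (Finset.subset_insert X S) Y

theorem stmt12 {V : Type*} [Fintype V] {Ω : Type*} [MeasurableSpace Ω]
    (μ : Measure Ω) [IsProbabilityMeasure μ]
    (E : V → V → Prop) (hwf : WellFounded E)
    (f : V → ℝ → ℝ) (hf : ∀ X, Monotone (f X))
    (θ : V → V → ℝ) (hθ : ∀ a b, 0 ≤ θ a b)
    (γ : Ω → V → ℝ) (hγ : ∀ X, Measurable (fun ω => γ ω X))
    (S : Finset V) (X Y : V) (hX : X ∉ S) (hXY : X ≠ Y) :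
    ∫ ω, (if activeSet E hwf f θ (γ ω) S Y then (1 : ℝ) else 0) ∂μ ≤
      ∫ ω, (if activeSet E hwf f θ (γ ω) (insert X S) Y then (1 : ℝ) else 0) ∂μ :=
  stmt12_general μ E hwf f hf θ hθ γ hγ S X Y
end

section
/- Let θ_1, θ_2 ∈ R^d and let G(θ) = Σ_{i=1}^t (f(V_iᵀθ) - f(V_iᵀθ*)) V_i, where f: R → R is continuously differentiable with derivative bounded below by κ > 0, V_i ∈ R^d, and M = Σ_{i=1}^t V_i V_iᵀ is positive definite. Then ‖G(θ_1)‖²_{M^{-1}} ≥ κ² λ_min(M) ‖θ_1 - θ*‖²_2. -/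
/-!
Put `w = θ₁ - θ*`. The mean value theorem gives `(f a - f b) (a - b) ≥ κ (a - b)²` for all reals,
so summing over the `V i` yields `G ⬝ w ≥ κ wᵀ M w`. Since `xᵀ M⁻¹ x = max_y (2 x ⬝ y - yᵀ M y)`,
evaluating at `y = κ w` gives `Gᵀ M⁻¹ G ≥ 2κ G ⬝ w - κ² wᵀ M w ≥ κ² wᵀ M w`, and finally
`wᵀ M w ≥ λ_min ‖w‖²`.
-/

open Matrix Finset

theorem mul_sq_sub_le_sub_mul_sub {f f' : ℝ → ℝ} (hf : ∀ x, HasDerivAt f (f' x) x) {κ : ℝ}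
    (hf' : ∀ x, κ ≤ f' x) (a b : ℝ) : κ * (a - b) ^ 2 ≤ (f a - f b) * (a - b) := by
  have hdiff : Differentiable ℝ f := fun x => (hf x).differentiableAt
  have hderiv : ∀ x, κ ≤ deriv f x := fun x => (hf x).deriv ▸ hf' x
  rcases le_total b a with hba | hab
  · nlinarith [mul_sub_le_image_sub_of_le_deriv hdiff hderiv hba]
  · nlinarith [mul_sub_le_image_sub_of_le_deriv hdiff hderiv hab]

namespace Matrix

variable {n : Type*} [Fintype n]

theorem dotProduct_sum_vecMulVec_mulVec {ι : Type*} (s : Finset ι) (V : ι → n → ℝ) (w : n → ℝ) :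
    w ⬝ᵥ ((∑ i ∈ s, vecMulVec (V i) (V i)) *ᵥ w) = ∑ i ∈ s, (V i ⬝ᵥ w) ^ 2 := by
  simp only [dotProduct_comm w, sum_mulVec, sum_dotProduct, vecMulVec_mulVec, op_smul_eq_smul,
    smul_dotProduct, smul_eq_mul, sq]

variable [DecidableEq n]

theorem IsHermitian.mul_dotProduct_le_dotProduct_mulVec {A : Matrix n n ℝ} (hA : A.IsHermitian)
    {c : ℝ} (hc : ∀ i, c ≤ hA.eigenvalues i) (w : n → ℝ) :
    c * (w ⬝ᵥ w) ≤ w ⬝ᵥ (A *ᵥ w) := by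
  have hpsd : (A - algebraMap ℝ _ c).PosSemidef := by
    rw [posSemidef_iff_isHermitian_and_spectrum_nonneg]
    refine ⟨hA.sub (IsSelfAdjoint.algebraMap _ (IsSelfAdjoint.all c)), ?_⟩
    rw [← spectrum.sub_singleton_eq, hA.spectrum_real_eq_range_eigenvalues]
    rintro _ ⟨_, ⟨i, rfl⟩, _, rfl, rfl⟩
    simpa using hc i
  simpa [sub_mulVec, Algebra.algebraMap_eq_smul_one, smul_mulVec, sub_nonneg] using
    hpsd.dotProduct_mulVec_nonneg w

theorem PosDef.two_mul_dotProduct_sub_le {M : Matrix n n ℝ} (hM : M.PosDef) (x y : n → ℝ) :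
    2 * (x ⬝ᵥ y) - y ⬝ᵥ (M *ᵥ y) ≤ x ⬝ᵥ (M⁻¹ *ᵥ x) := by
  have hMM : M *ᵥ (M⁻¹ *ᵥ x) = x := by
    rw [mulVec_mulVec, mul_nonsing_inv _ hM.det_pos.ne'.isUnit, one_mulVec]
  have hsymm : (M⁻¹ *ᵥ x) ⬝ᵥ (M *ᵥ y) = y ⬝ᵥ x := by
    have hT : Mᵀ = M := (isHermitian_iff_isSymm.mp hM.isHermitian).eq
    rw [← dotProduct_transpose_mulVec, hT, hMM]
  have := hM.posSemidef.dotProduct_mulVec_nonneg (y - M⁻¹ *ᵥ x)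
  simp only [star_trivial, mulVec_sub, sub_dotProduct, dotProduct_sub, hMM, hsymm] at this
  linarith [dotProduct_comm x y, dotProduct_comm (M⁻¹ *ᵥ x) x]

end Matrix

theorem stmt16 (d t : ℕ) (hd : 0 < d) (f f' : ℝ → ℝ)
    (hf : ∀ x, HasDerivAt f (f' x) x)
    (κ : ℝ) (hκ : 0 < κ) (hf' : ∀ x, κ ≤ f' x)
    (V : Fin t → Fin d → ℝ) (θstar θ₁ : Fin d → ℝ)
    (M : Matrix (Fin d) (Fin d) ℝ)
    (hMdef : M = ∑ i, Matrix.vecMulVec (V i) (V i)) (hM : M.PosDef) :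
    κ ^ 2 *
        (Finset.univ.inf'
          (by haveI : NeZero d := ⟨hd.ne'⟩; exact Finset.univ_nonempty) hM.1.eigenvalues) *
        (∑ j, (θ₁ j - θstar j) ^ 2) ≤
      (∑ i, (f (V i ⬝ᵥ θ₁) - f (V i ⬝ᵥ θstar)) • V i) ⬝ᵥ
        (M⁻¹ *ᵥ (∑ i, (f (V i ⬝ᵥ θ₁) - f (V i ⬝ᵥ θstar)) • V i)) := by
  set G := ∑ i, (f (V i ⬝ᵥ θ₁) - f (V i ⬝ᵥ θstar)) • V i
  set w := θ₁ - θstar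
  have hQ : w ⬝ᵥ (M *ᵥ w) = ∑ i, (V i ⬝ᵥ w) ^ 2 := hMdef ▸ dotProduct_sum_vecMulVec_mulVec _ _ _
  have hGw : κ * (w ⬝ᵥ (M *ᵥ w)) ≤ G ⬝ᵥ w := by
    rw [hQ, mul_sum, sum_dotProduct]
    gcongr with i
    rw [smul_dotProduct, smul_eq_mul, show V i ⬝ᵥ w = _ from dotProduct_sub _ _ _]
    exact mul_sq_sub_le_sub_mul_sub hf hf' _ _
  have hne : (univ : Finset (Fin d)).Nonempty := ⟨⟨0, hd⟩, mem_univ _⟩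
  have hray : univ.inf' hne hM.1.eigenvalues * (w ⬝ᵥ w) ≤ w ⬝ᵥ (M *ᵥ w) :=
    hM.1.mul_dotProduct_le_dotProduct_mulVec (fun i => inf'_le _ (mem_univ i)) w
  have hsq : ∑ j, (θ₁ j - θstar j) ^ 2 = w ⬝ᵥ w := by simp [dotProduct, sq, w]
  calc κ ^ 2 * univ.inf' hne hM.1.eigenvalues * ∑ j, (θ₁ j - θstar j) ^ 2
      ≤ κ ^ 2 * (w ⬝ᵥ (M *ᵥ w)) := by
        rw [hsq, mul_assoc]
        exact mul_le_mul_of_nonneg_left hray (sq_nonneg κ)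
    _ ≤ 2 * (G ⬝ᵥ (κ • w)) - (κ • w) ⬝ᵥ (M *ᵥ (κ • w)) := by
        simp only [dotProduct_smul, mulVec_smul, smul_dotProduct, smul_eq_mul]
        linarith [mul_le_mul_of_nonneg_left hGw hκ.le]
    _ ≤ G ⬝ᵥ (M⁻¹ *ᵥ G) := hM.two_mul_dotProduct_sub_le G (κ • w)
end
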